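/- Let 0 < δ < 1, let n = ⌈4/δ²⌉, let ε = (ln n)/n, and consider n+1 coins, one with heads-probability 1 and n with heads-probability 1 − ε. Let b be the ordering that places the probability-1 coin first (followed by the n coins of probability 1 − ε), and let a be the ordering that places the probability-1 coin last. Then cost(b) − cost(a) > 1 − δ. (Here b is the ordering produced by the greedy algorithm on this instance, so the greedy ordering can cost nearly 1 more than optimal.) -/

import Mathlib

/-!
Write `p = 1 - ε`. Placed first, the sure coin kills every tails-product, so
`cost b - cost a = ∑_{k=1}^{n-1} (p^k - p^(k+1) - ε^(k+1)) = p - p^n - ε ∑_{k=1}^{n-1} ε^k`.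
Since `p^n ≤ exp (-ε n) = 1/n` and `ε = log n / n ≤ 3 / (4 √n)`, the loss
`ε + 1/n + ε² / (1 - ε)` stays below `2 / √n ≤ δ`.
-/

open Finset

/-- The cost of an ordering `c` of `m` coins with heads-probabilities `q`:
`cost = 2 + Σ_{j=3}^{m} (∏_{i=1}^{j-1} q_{c(i)} + ∏_{i=1}^{j-1} (1 - q_{c(i)}))`. -/
noncomputable def cost (m : ℕ) (q : ℕ → ℝ) (c : ℕ → ℕ) : ℝ :=
  2 + ∑ j ∈ Finset.Icc 3 m,
    (∏ i ∈ Finset.Ico 1 j, q (c i) + ∏ i ∈ Finset.Ico 1 j, (1 - q (c i)))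

theorem cost_succ_eq (n : ℕ) (q : ℕ → ℝ) (c : ℕ → ℕ) :
    cost (n + 1) q c = 2 + ∑ k ∈ Ico 1 n,
      (∏ i ∈ Ico 1 (k + 2), q (c i) + ∏ i ∈ Ico 1 (k + 2), (1 - q (c i))) := by
  rw [cost, ← Ico_add_one_right_eq_Icc]
  exact congrArg (2 + ·) (sum_Ico_add' _ 1 n 2).symm

theorem cost_of_sure_first {n : ℕ} {q : ℕ → ℝ} {c : ℕ → ℕ} {p : ℝ} (h1 : q (c 1) = 1)
    (hp : ∀ i, 2 ≤ i → i ≤ n → q (c i) = p) :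
    cost (n + 1) q c = 2 + ∑ k ∈ Ico 1 n, p ^ k := by
  rw [cost_succ_eq]
  congr 1
  refine sum_congr rfl fun k hk => ?_
  have hk := mem_Ico.1 hk
  have h_tails : ∏ i ∈ Ico 1 (k + 2), (1 - q (c i)) = 0 :=
    prod_eq_zero (i := 1) (by simp) (by rw [h1, sub_self])
  rw [h_tails, add_zero, prod_eq_prod_Ico_succ_bot (by omega), h1, one_mul,
    prod_eq_pow_card fun i hi => hp i (mem_Ico.1 hi).1 (by grind), Nat.card_Ico]
  rfl

theorem cost_of_const_prefix {n : ℕ} {q : ℕ → ℝ} {c : ℕ → ℕ} {p : ℝ}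
    (hp : ∀ i, 1 ≤ i → i ≤ n → q (c i) = p) :
    cost (n + 1) q c = 2 + ∑ k ∈ Ico 1 n, (p ^ (k + 1) + (1 - p) ^ (k + 1)) := by
  rw [cost_succ_eq]
  congr 1
  refine sum_congr rfl fun k hk => ?_
  have hpk : ∀ i ∈ Ico 1 (k + 2), q (c i) = p := fun i hi =>
    hp i (mem_Ico.1 hi).1 (by grind)
  rw [prod_eq_pow_card hpk, prod_eq_pow_card (b := 1 - p) fun i hi => by rw [hpk i hi],
    Nat.card_Ico]
  rfl

theorem sub_le_cost_sub_cost {n : ℕ} (hn : 1 ≤ n) {q : ℕ → ℝ} {ε : ℝ} (hε0 : 0 ≤ ε)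
    (hε1 : ε < 1) {b a : ℕ → ℕ} (hb1 : q (b 1) = 1)
    (hb : ∀ i, 2 ≤ i → i ≤ n → q (b i) = 1 - ε) (ha : ∀ i, 1 ≤ i → i ≤ n → q (a i) = 1 - ε) :
    1 - ε - (1 - ε) ^ n - ε ^ 2 / (1 - ε) ≤ cost (n + 1) q b - cost (n + 1) q a := by
  rw [cost_of_sure_first hb1 hb, cost_of_const_prefix ha, sub_sub_cancel]
  have h_gap : (2 + ∑ k ∈ Ico 1 n, (1 - ε) ^ k)
        - (2 + ∑ k ∈ Ico 1 n, ((1 - ε) ^ (k + 1) + ε ^ (k + 1)))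
      = (∑ k ∈ Ico 1 n, (1 - ε) ^ k) * ε - ε * ∑ k ∈ Ico 1 n, ε ^ k := by
    simp only [sum_add_distrib, pow_succ, ← sum_mul, mul_comm ε]
    ring
  have h_telescope := geom_sum_Ico_mul_neg (1 - ε) hn
  rw [sub_sub_cancel, pow_one] at h_telescope
  have h_tail := mul_le_mul_of_nonneg_left (geom_sum_Ico_le_of_lt_one (m := 1) (n := n) hε0 hε1) hε0
  rw [pow_one, mul_div_assoc', ← sq] at h_tail
  rw [h_gap, h_telescope]
  linarith

theorem one_sub_log_div_pow_le (n : ℕ) (hn : 0 < n) :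
    (1 - Real.log n / n) ^ n ≤ 1 / n := by
  have hn' : (0 : ℝ) < n := by exact_mod_cast hn
  have h_base : 0 ≤ 1 - Real.log n / n := by
    rw [sub_nonneg, div_le_one hn']
    exact Real.log_le_self hn'.le
  calc (1 - Real.log n / n) ^ n ≤ Real.exp (-(Real.log n / n)) ^ n := by
        gcongr
        linarith [Real.add_one_le_exp (-(Real.log n / n))]
    _ = 1 / n := by
        rw [← Real.exp_nat_mul, mul_neg, mul_div_cancel₀ _ hn'.ne', Real.exp_neg,
          Real.exp_log hn', one_div]

theorem log_le_div_exp_one {x : ℝ} (hx : 0 < x) : Real.log x ≤ x / Real.exp 1 := by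
  have := Real.log_le_sub_one_of_pos (div_pos hx (Real.exp_pos 1))
  rw [Real.log_div hx.ne' (Real.exp_pos 1).ne', Real.log_exp] at this
  linarith

theorem log_div_self_le {x : ℝ} (hx : 0 < x) : Real.log x / x ≤ 3 / (4 * √x) := by
  have hs : 0 < √x := Real.sqrt_pos.2 hx
  have h_log : Real.log x ≤ 3 / 4 * √x :=
    calc Real.log x = 2 * Real.log √x := by rw [Real.log_sqrt hx.le]; ring
      _ ≤ 2 * (√x / Real.exp 1) := by gcongr; exact log_le_div_exp_one hs
      _ ≤ 3 / 4 * √x := by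
        rw [mul_div_assoc', div_le_iff₀ (Real.exp_pos 1)]
        nlinarith [Real.exp_one_gt_d9]
  calc Real.log x / x ≤ 3 / 4 * √x / x := by gcongr
    _ = 3 / 4 * √x / (√x * √x) := by rw [Real.mul_self_sqrt hx.le]
    _ = 3 / (4 * √x) := by field_simp

theorem add_inv_sq_add_sq_div_lt {s ε : ℝ} (hs : 2 ≤ s) (hε0 : 0 ≤ ε) (hε : ε ≤ 3 / (4 * s)) :
    ε + 1 / s ^ 2 + ε ^ 2 / (1 - ε) < 2 / s := by
  have hs0 : 0 < s := by linarith
  have hεs : ε * s ≤ 3 / 4 := by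
    have := (le_div_iff₀ (by positivity)).1 hε
    linarith
  have h_tail : ε ^ 2 / (1 - ε) ≤ 8 / 5 * ε ^ 2 := by
    have : ε ≤ 3 / 8 := by nlinarith
    rw [div_le_iff₀ (by linarith)]
    nlinarith
  have h_main : ε + 1 / s ^ 2 + 8 / 5 * ε ^ 2 < 2 / s := by
    have h_eq : 2 / s - (ε + 1 / s ^ 2 + 8 / 5 * ε ^ 2)
        = (2 * s - ε * s ^ 2 - 1 - 8 / 5 * (ε * s) ^ 2) / s ^ 2 := by
      field_simp
      ring
    have h_lin : ε * s ^ 2 ≤ 3 / 4 * s := by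
      rw [sq, ← mul_assoc]
      exact mul_le_mul_of_nonneg_right hεs hs0.le
    have h_sq : (ε * s) ^ 2 ≤ (3 / 4) ^ 2 := pow_le_pow_left₀ (by positivity) hεs 2
    rw [← sub_pos, h_eq]
    exact div_pos (by linarith) (by positivity)
  linarith

theorem two_div_sqrt_le {δ x : ℝ} (hδ : 0 < δ) (hx : 4 / δ ^ 2 ≤ x) : 2 / √x ≤ δ := by
  have hx0 : 0 < x := lt_of_lt_of_le (by positivity) hx
  have h : 2 / δ ≤ √x := by
    rw [← Real.sqrt_sq (by positivity : 0 ≤ 2 / δ)]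
    apply Real.sqrt_le_sqrt
    rwa [div_pow, show (2 : ℝ) ^ 2 = 4 by norm_num]
  rw [div_le_iff₀ hδ] at h
  rw [div_le_iff₀ (Real.sqrt_pos.2 hx0)]
  linarith

theorem greedy_minus_opt_at_least_general (δ : ℝ) (hδ0 : 0 < δ) (hδ1 : δ < 1)
    (n : ℕ) (hn : n = ⌈(4 : ℝ) / δ ^ 2⌉₊)
    (ε : ℝ) (hε : ε = Real.log n / n)
    (q : ℕ → ℝ) (hq1 : q 1 = 1)
    (hq : ∀ i, 2 ≤ i → i ≤ n + 1 → q i = 1 - ε)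
    (b : ℕ → ℕ) (hb : ∀ i, b i = i)
    (a : ℕ → ℕ) (ha : ∀ i, 1 ≤ i → i ≤ n → a i = i + 1) :
    cost (n + 1) q b - cost (n + 1) q a > 1 - δ := by
  have h_ceil : 4 / δ ^ 2 ≤ (n : ℝ) := hn ▸ Nat.le_ceil _
  have hn4 : (4 : ℝ) ≤ n := by
    refine le_trans ?_ h_ceil
    rw [le_div_iff₀ (by positivity)]
    nlinarith
  have hn0 : (0 : ℝ) < n := by linarith
  have hs : 2 ≤ √(n : ℝ) := by
    rw [Real.le_sqrt (by norm_num) hn0.le]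
    linarith
  have hε0 : 0 ≤ ε := hε ▸ div_nonneg (Real.log_nonneg (by linarith)) hn0.le
  have hε_le : ε ≤ 3 / (4 * √(n : ℝ)) := hε ▸ log_div_self_le hn0
  have hε1 : ε < 1 := hε_le.trans_lt <| by
    rw [div_lt_one (by positivity)]
    linarith
  have h_gap := sub_le_cost_sub_cost (q := q) (b := b) (a := a) (by exact_mod_cast hn0) hε0 hε1
    (by rw [hb, hq1]) (fun i h2 hi => by rw [hb]; exact hq i h2 (by omega))
    (fun i h1 hi => by rw [ha i h1 hi]; exact hq _ (by omega) (by omega))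
  have h_pow : (1 - ε) ^ n ≤ 1 / n := hε ▸ one_sub_log_div_pow_le n (by exact_mod_cast hn0)
  have h_loss := add_inv_sq_add_sq_div_lt hs hε0 hε_le
  rw [Real.sq_sqrt hn0.le] at h_loss
  linarith [two_div_sqrt_le hδ0 h_ceil]

/-- For `0 < δ < 1`, `n = ⌈4/δ²⌉`, `ε = (ln n)/n`, and an instance of `n+1`
coins — one with heads-probability `1` and `n` with heads-probability `1-ε` —
the ordering `b` placing the probability-1 coin first costs more than `1 - δ`
plus the cost of the ordering `a` placing the probability-1 coin last. -/
theorem greedy_minus_opt_at_least (δ : ℝ) (hδ0 : 0 < δ) (hδ1 : δ < 1)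
    (n : ℕ) (hn : n = ⌈(4 : ℝ) / δ ^ 2⌉₊)
    (ε : ℝ) (hε : ε = Real.log n / n)
    (q : ℕ → ℝ) (hq1 : q 1 = 1)
    (hq : ∀ i, 2 ≤ i → i ≤ n + 1 → q i = 1 - ε)
    (b : ℕ → ℕ) (hb : ∀ i, b i = i)
    (a : ℕ → ℕ) (ha : ∀ i, 1 ≤ i → i ≤ n → a i = i + 1) (han : a (n + 1) = 1) :
    cost (n + 1) q b - cost (n + 1) q a > 1 - δ :=
  greedy_minus_opt_at_least_general δ hδ0 hδ1 n hn ε hε q hq1 hq b hb a ha
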